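/- Suppose that for every choice of finite-dimensional complex Hilbert spaces H₁, H₂, H₁', H₂' and every PURE state π on (H₁⊗H₂) ⊗ (H₁'⊗H₂') one has E_m(π) ≥ E_m(tr_{H₁'⊗H₂'} π) + E_m(tr_{H₁⊗H₂} π) (with E_m computed across the 1–2 cuts). Then for every (not necessarily pure) state ρ on (H₁⊗H₂) ⊗ (H₁'⊗H₂'), E_m(ρ) ≥ E_m(tr_{H₁'⊗H₂'} ρ) + E_m(tr_{H₁⊗H₂} ρ). -/

import Mathlib

/-!
Let `ρ̃ = ∑ᵢ pᵢ πᵢ` be any pure-state ensemble of `ρ` regrouped as `(H₁⊗H₁')⊗(H₂⊗H₂')`. Each `πᵢ`,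
read back on `(H₁⊗H₂)⊗(H₁'⊗H₂')`, is a pure state `σᵢ` with `ρ = ∑ᵢ pᵢ σᵢ`, so by hypothesis
`E(πᵢ) ≥ E_m(πᵢ) ≥ E_m(tr_{1'2'} σᵢ) + E_m(tr_{12} σᵢ)`.
Taking partial traces, `tr_{1'2'} ρ = ∑ᵢ pᵢ tr_{1'2'} σᵢ` and likewise for `tr_{12}`, and `E_m` of a
mixture is at most `E_m` of each component: an ensemble of one component, together with ensembles
of the others (which exist by the spectral theorem), is an ensemble of the mixture. Hence
`E(πᵢ) ≥ E_m(tr_{1'2'} ρ) + E_m(tr_{12} ρ)` for every `i`, and the infimum over ensembles of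
`ρ̃` gives the claim.
-/

open Matrix Kronecker BigOperators ComplexOrder

noncomputable section

namespace QAdditivity

/-- von Neumann entropy of a matrix (junk value `0` if not Hermitian):
`S(ρ) = -∑ᵢ λᵢ log λᵢ` over the eigenvalues of `ρ`. -/
def entropy {ι : Type} [Fintype ι] [DecidableEq ι] (ρ : Matrix ι ι ℂ) : ℝ :=
  if h : ρ.IsHermitian then ∑ i, Real.negMulLog (h.eigenvalues i) else 0

/-- A state: positive semidefinite with trace one. -/
def IsState {ι : Type} [Fintype ι] (ρ : Matrix ι ι ℂ) : Prop :=
  ρ.PosSemidef ∧ ρ.trace = 1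

/-- A pure state: rank-one state, i.e. `|φ⟩⟨φ|` for a unit vector `φ`. -/
def IsPureState {ι : Type} [Fintype ι] (ρ : Matrix ι ι ℂ) : Prop :=
  ∃ φ : ι → ℂ, star φ ⬝ᵥ φ = 1 ∧ ρ = vecMulVec φ (star φ)

/-- Partial trace over the second tensor factor. -/
def trRight {ι κ : Type} [Fintype ι] [Fintype κ]
    (ρ : Matrix (ι × κ) (ι × κ) ℂ) : Matrix ι ι ℂ :=
  Matrix.of fun i j => ∑ k, ρ (i, k) (j, k)

/-- Partial trace over the first tensor factor. -/
def trLeft {ι κ : Type} [Fintype ι] [Fintype κ]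
    (ρ : Matrix (ι × κ) (ι × κ) ℂ) : Matrix κ κ ℂ :=
  Matrix.of fun k l => ∑ i, ρ (i, k) (i, l)

/-- Entanglement of a (pure) bipartite state: `E(π) = S(tr_{H₂} π)`. -/
def pureEnt {ι κ : Type} [Fintype ι] [Fintype κ] [DecidableEq ι]
    (π : Matrix (ι × κ) (ι × κ) ℂ) : ℝ :=
  entropy (trRight π)

/-- `E_m(ρ)`: minimum over finite pure-state ensembles for `ρ` of the minimal
entanglement appearing in the ensemble. -/
def Em {ι κ : Type} [Fintype ι] [Fintype κ] [DecidableEq ι]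
    (ρ : Matrix (ι × κ) (ι × κ) ℂ) : ℝ :=
  sInf { e : ℝ | ∃ (n : ℕ) (p : Fin (n + 1) → ℝ)
      (π : Fin (n + 1) → Matrix (ι × κ) (ι × κ) ℂ),
    (∀ i, 0 < p i) ∧ (∀ i, IsPureState (π i)) ∧
    (∑ i, (p i : ℂ) • π i) = ρ ∧
    e = Finset.univ.inf' Finset.univ_nonempty fun i => pureEnt (π i) }

/-- Entanglement of formation `E_f(ρ)`. -/
def Ef {ι κ : Type} [Fintype ι] [Fintype κ] [DecidableEq ι]
    (ρ : Matrix (ι × κ) (ι × κ) ℂ) : ℝ :=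
  sInf { e : ℝ | ∃ (n : ℕ) (p : Fin (n + 1) → ℝ)
      (π : Fin (n + 1) → Matrix (ι × κ) (ι × κ) ℂ),
    (∀ i, 0 < p i) ∧ (∀ i, IsPureState (π i)) ∧
    (∑ i, (p i : ℂ) • π i) = ρ ∧
    e = ∑ i, p i * pureEnt (π i) }

/-- Canonical reordering `(H₁⊗H₂)⊗(H₁'⊗H₂') ≃ (H₁⊗H₁')⊗(H₂⊗H₂')` on matrices. -/
def reorder {a b a' b' : Type}
    (M : Matrix ((a × b) × (a' × b')) ((a × b) × (a' × b')) ℂ) :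
    Matrix ((a × a') × (b × b')) ((a × a') × (b × b')) ℂ :=
  Matrix.reindex (Equiv.prodProdProdComm a b a' b') (Equiv.prodProdProdComm a b a' b') M

/-- Complete positivity of a superoperator. -/
def IsCompletelyPositive {κ η : Type} [Fintype κ] [Fintype η]
    (f : Matrix κ κ ℂ → Matrix η η ℂ) : Prop :=
  ∀ (n : ℕ) (M : Matrix (κ × Fin n) (κ × Fin n) ℂ), M.PosSemidef →
    Matrix.PosSemidef (Matrix.of fun p q : η × Fin n =>
      f (Matrix.of fun a b => M (a, p.2) (b, q.2)) p.1 q.1)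

/-- A quantum channel: a completely positive trace preserving linear map. -/
def IsChannel {κ η : Type} [Fintype κ] [Fintype η]
    (f : Matrix κ κ ℂ → Matrix η η ℂ) : Prop :=
  IsLinearMap ℂ f ∧ IsCompletelyPositive f ∧ ∀ M, (f M).trace = M.trace

/-- Minimum output entropy of a channel. -/
def Smin {κ η : Type} [Fintype κ] [Fintype η] [DecidableEq η]
    (f : Matrix κ κ ℂ → Matrix η η ℂ) : ℝ :=
  sInf { e : ℝ | ∃ ρ : Matrix κ κ ℂ, IsState ρ ∧ e = entropy (f ρ) }

/-- The tensor product `Λ ⊗ Λ'` of two superoperators (defined on all of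
`B(K ⊗ K')` by linearity via matrix units). -/
def tensorChannel {κ η κ' η' : Type} [Fintype κ] [Fintype κ']
    [DecidableEq κ] [DecidableEq κ']
    (f : Matrix κ κ ℂ → Matrix η η ℂ) (g : Matrix κ' κ' ℂ → Matrix η' η' ℂ) :
    Matrix (κ × κ') (κ × κ') ℂ → Matrix (η × η') (η × η') ℂ :=
  fun M => Matrix.of fun p q =>
    ∑ a, ∑ b, ∑ a', ∑ b', M (a, a') (b, b') *
      f (Matrix.single a b 1) p.1 q.1 *
      g (Matrix.single a' b' 1) p.2 q.2

/-- Support of an operator: its range. -/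
def supp {ι : Type} [Fintype ι] (ρ : Matrix ι ι ℂ) : Submodule ℂ (ι → ℂ) :=
  LinearMap.range ρ.mulVecLin

section States

variable {ι κ : Type} [Fintype ι] [Fintype κ]

theorem IsPureState.isState {ρ : Matrix ι ι ℂ} (h : IsPureState ρ) : IsState ρ := by
  obtain ⟨φ, hφ, rfl⟩ := h
  refine ⟨posSemidef_vecMulVec_self_star φ, ?_⟩
  rw [trace_vecMulVec, ← hφ, dotProduct_comm]

theorem IsState.reindex {α : Type} [Fintype α] {ρ : Matrix ι ι ℂ} (h : IsState ρ)
    (e : ι ≃ α) : IsState (Matrix.reindex e e ρ) :=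
  ⟨by simpa using h.1.submatrix e.symm, by
    rw [← h.2]
    exact e.symm.sum_comp fun i => ρ i i⟩

theorem IsPureState.reindex {α : Type} [Fintype α] {ρ : Matrix ι ι ℂ} (h : IsPureState ρ)
    (e : ι ≃ α) : IsPureState (Matrix.reindex e e ρ) := by
  obtain ⟨φ, hφ, rfl⟩ := h
  refine ⟨φ ∘ e.symm, ?_, ?_⟩
  · rw [← hφ]
    exact Equiv.sum_comp e.symm fun i => star (φ i) * φ i
  · ext x y
    simp [vecMulVec_apply]

theorem trRight_eq_sum_submatrix (ρ : Matrix (ι × κ) (ι × κ) ℂ) :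
    trRight ρ = ∑ k, ρ.submatrix (fun i => (i, k)) (fun j => (j, k)) := by
  ext i j
  simp [trRight, Matrix.sum_apply]

theorem isState_trRight {ρ : Matrix (ι × κ) (ι × κ) ℂ} (h : IsState ρ) :
    IsState (trRight ρ) := by
  refine ⟨?_, ?_⟩
  · rw [trRight_eq_sum_submatrix]
    exact posSemidef_sum _ fun k _ => h.1.submatrix _
  · rw [← h.2]
    simp [Matrix.trace, trRight, Fintype.sum_prod_type]

theorem isState_trLeft {ρ : Matrix (ι × κ) (ι × κ) ℂ} (h : IsState ρ) :
    IsState (trLeft ρ) := by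
  have hswap : trLeft ρ = trRight (Matrix.reindex (Equiv.prodComm ι κ)
      (Equiv.prodComm ι κ) ρ) := by
    ext k l
    simp [trLeft, trRight]
  rw [hswap]
  exact isState_trRight (h.reindex _)

theorem trRight_sum_smul {γ : Type} [Fintype γ] (c : γ → ℂ)
    (M : γ → Matrix (ι × κ) (ι × κ) ℂ) :
    trRight (∑ i, c i • M i) = ∑ i, c i • trRight (M i) := by
  ext x y
  simp only [trRight, of_apply, Matrix.sum_apply, Matrix.smul_apply, smul_eq_mul, Finset.mul_sum]
  exact Finset.sum_comm

theorem trLeft_sum_smul {γ : Type} [Fintype γ] (c : γ → ℂ)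
    (M : γ → Matrix (ι × κ) (ι × κ) ℂ) :
    trLeft (∑ i, c i • M i) = ∑ i, c i • trLeft (M i) := by
  ext x y
  simp only [trLeft, of_apply, Matrix.sum_apply, Matrix.smul_apply, smul_eq_mul, Finset.mul_sum]
  exact Finset.sum_comm

variable [DecidableEq ι]

theorem IsState.sum_eigenvalues {ρ : Matrix ι ι ℂ} (h : IsState ρ) :
    ∑ i, h.1.1.eigenvalues i = 1 := by
  have htr := h.2
  rw [h.1.1.trace_eq_sum_eigenvalues] at htr
  simpa using congrArg Complex.re htr

theorem IsState.entropy_nonneg {ρ : Matrix ι ι ℂ} (h : IsState ρ) : 0 ≤ entropy ρ := by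
  rw [entropy, dif_pos h.1.1]
  refine Finset.sum_nonneg fun i _ => Real.negMulLog_nonneg (h.1.eigenvalues_nonneg i) ?_
  rw [← h.sum_eigenvalues]
  exact Finset.single_le_sum (fun j _ => h.1.eigenvalues_nonneg j) (Finset.mem_univ i)

end States

theorem exists_equiv_fin_succ (γ : Type) [Fintype γ] [Nonempty γ] :
    ∃ n : ℕ, Nonempty (γ ≃ Fin (n + 1)) :=
  ⟨Fintype.card γ - 1, ⟨Fintype.equivFinOfCardEq (Nat.succ_pred_eq_of_pos Fintype.card_pos).symm⟩⟩

section Ensembles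

variable {ι : Type} [Fintype ι]

def IsPureEnsemble {γ : Type} [Fintype γ] (p : γ → ℝ) (π : γ → Matrix ι ι ℂ)
    (ρ : Matrix ι ι ℂ) : Prop :=
  (∀ i, 0 < p i) ∧ (∀ i, IsPureState (π i)) ∧ ∑ i, (p i : ℂ) • π i = ρ

theorem IsPureEnsemble.comp_equiv {γ δ : Type} [Fintype γ] [Fintype δ] {p : γ → ℝ}
    {π : γ → Matrix ι ι ℂ} {ρ : Matrix ι ι ℂ} (h : IsPureEnsemble p π ρ) (e : δ ≃ γ) :
    IsPureEnsemble (p ∘ e) (π ∘ e) ρ :=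
  ⟨fun i => h.1 (e i), fun i => h.2.1 (e i), by
    rw [← h.2.2]
    exact e.sum_comp fun i => (p i : ℂ) • π i⟩

theorem IsPureEnsemble.sigma {γ : Type} [Fintype γ] {δ : γ → Type} [∀ i, Fintype (δ i)]
    {c : γ → ℝ} {σ : γ → Matrix ι ι ℂ} {ρ : Matrix ι ι ℂ} {q : ∀ i, δ i → ℝ}
    {τ : ∀ i, δ i → Matrix ι ι ℂ} (hc : ∀ i, 0 < c i) (hσ : ∑ i, (c i : ℂ) • σ i = ρ)
    (h : ∀ i, IsPureEnsemble (q i) (τ i) (σ i)) :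
    IsPureEnsemble (fun x : Σ i, δ i => c x.1 * q x.1 x.2) (fun x => τ x.1 x.2) ρ := by
  refine ⟨fun x => mul_pos (hc x.1) ((h x.1).1 x.2), fun x => (h x.1).2.1 x.2, ?_⟩
  rw [← hσ, ← Finset.univ_sigma_univ, Finset.sum_sigma]
  refine Finset.sum_congr rfl fun i _ => ?_
  rw [← (h i).2.2, Finset.smul_sum]
  simp only [Complex.ofReal_mul, mul_smul]

theorem _root_.Matrix.IsHermitian.eq_sum_eigenvalues_smul_vecMulVec [DecidableEq ι]
    {ρ : Matrix ι ι ℂ} (hρ : ρ.IsHermitian) :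
    ρ = ∑ j, (hρ.eigenvalues j : ℂ) •
      vecMulVec ⇑(hρ.eigenvectorBasis j) (star ⇑(hρ.eigenvectorBasis j)) := by
  ext i k
  conv_lhs => rw [hρ.spectral_theorem, Unitary.conjStarAlgAut_apply]
  simp only [Matrix.mul_apply, IsHermitian.eigenvectorUnitary_apply, diagonal_apply,
    Function.comp_apply, mul_ite, mul_zero, Finset.sum_ite_eq', Finset.mem_univ, ↓reduceIte,
    star_apply, RCLike.star_def, Matrix.sum_apply, Matrix.smul_apply, vecMulVec_apply,
    Pi.star_apply, Complex.coe_algebraMap]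
  exact Finset.sum_congr rfl fun j _ => by ring

theorem isPureState_vecMulVec_eigenvectorBasis [DecidableEq ι] {ρ : Matrix ι ι ℂ}
    (hρ : ρ.IsHermitian) (j : ι) :
    IsPureState (vecMulVec ⇑(hρ.eigenvectorBasis j) (star ⇑(hρ.eigenvectorBasis j))) := by
  refine ⟨_, ?_, rfl⟩
  rw [dotProduct_comm, ← EuclideanSpace.inner_eq_star_dotProduct]
  simp [hρ.eigenvectorBasis.orthonormal.1 j]

theorem IsState.exists_isPureEnsemble [DecidableEq ι] {ρ : Matrix ι ι ℂ} (h : IsState ρ) :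
    ∃ (n : ℕ) (p : Fin (n + 1) → ℝ) (π : Fin (n + 1) → Matrix ι ι ℂ), IsPureEnsemble p π ρ := by
  have hρ : ρ.IsHermitian := h.1.1
  let v (j : ι) := vecMulVec ⇑(hρ.eigenvectorBasis j) (star ⇑(hρ.eigenvectorBasis j))
  obtain ⟨j₀, hj₀⟩ : ∃ j, 0 < hρ.eigenvalues j := by
    by_contra! hnonpos
    linarith [h.sum_eigenvalues, Finset.sum_nonpos fun j (_ : j ∈ Finset.univ) => hnonpos j]
  have : Nonempty {j // 0 < hρ.eigenvalues j} := ⟨⟨j₀, hj₀⟩⟩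
  obtain ⟨n, ⟨e⟩⟩ := exists_equiv_fin_succ {j // 0 < hρ.eigenvalues j}
  suffices IsPureEnsemble (fun j : {j // 0 < hρ.eigenvalues j} => hρ.eigenvalues j)
      (fun j => v j) ρ from ⟨n, _, _, this.comp_equiv e.symm⟩
  refine ⟨fun j => j.2, fun j => isPureState_vecMulVec_eigenvectorBasis hρ j,
    Eq.trans ?_ hρ.eq_sum_eigenvalues_smul_vecMulVec.symm⟩
  rw [← Finset.sum_subtype {j | 0 < hρ.eigenvalues j} (fun j => by simp)
    fun j => (hρ.eigenvalues j : ℂ) • v j]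
  refine Finset.sum_filter_of_ne fun j _ hj => ?_
  refine lt_of_le_of_ne (h.1.eigenvalues_nonneg j) fun h0 => hj ?_
  simp [← h0]

end Ensembles

section Em

variable {ι κ : Type} [Fintype ι] [Fintype κ] [DecidableEq ι]

theorem Em_le_pureEnt_of_isPureEnsemble {γ : Type} [Fintype γ] {p : γ → ℝ}
    {π : γ → Matrix (ι × κ) (ι × κ) ℂ} {ρ : Matrix (ι × κ) (ι × κ) ℂ}
    (h : IsPureEnsemble p π ρ) (i : γ) : Em ρ ≤ pureEnt (π i) := by
  have : Nonempty γ := ⟨i⟩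
  obtain ⟨n, ⟨e⟩⟩ := exists_equiv_fin_succ γ
  obtain ⟨hp, hπ, hsum⟩ := h.comp_equiv e.symm
  unfold Em
  refine le_trans (csInf_le ⟨0, ?_⟩ ⟨n, _, _, hp, hπ, hsum, rfl⟩) ?_
  · rintro _ ⟨n, p, π, -, hπ, -, rfl⟩
    exact Finset.le_inf' _ _ fun i _ => (isState_trRight (hπ i).isState).entropy_nonneg
  · simpa only [Function.comp_apply, Equiv.symm_apply_apply] using
      Finset.inf'_le (fun j => pureEnt ((π ∘ e.symm) j)) (Finset.mem_univ (e i))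

theorem IsPureState.Em_le_pureEnt {π : Matrix (ι × κ) (ι × κ) ℂ} (h : IsPureState π) :
    Em π ≤ pureEnt π :=
  Em_le_pureEnt_of_isPureEnsemble (p := fun _ : Unit => 1) (π := fun _ => π)
    ⟨fun _ => one_pos, fun _ => h, by simp⟩ ()

theorem le_Em {ρ : Matrix (ι × κ) (ι × κ) ℂ} (hρ : IsState ρ) {x : ℝ}
    (h : ∀ (n : ℕ) (p : Fin (n + 1) → ℝ) (π : Fin (n + 1) → Matrix (ι × κ) (ι × κ) ℂ),
      IsPureEnsemble p π ρ → ∀ i, x ≤ pureEnt (π i)) :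
    x ≤ Em ρ := by
  classical
  obtain ⟨n, p, π, hens⟩ := hρ.exists_isPureEnsemble
  refine le_csInf ⟨_, n, p, π, hens.1, hens.2.1, hens.2.2, rfl⟩ ?_
  rintro _ ⟨n, p, π, hp, hπ, hsum, rfl⟩
  exact Finset.le_inf' _ _ fun i _ => h n p π ⟨hp, hπ, hsum⟩ i

theorem Em_le_Em_of_sum_smul_eq {γ : Type} [Fintype γ] {c : γ → ℝ}
    {σ : γ → Matrix (ι × κ) (ι × κ) ℂ} {ρ : Matrix (ι × κ) (ι × κ) ℂ} (hc : ∀ i, 0 < c i)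
    (hσ : ∀ i, IsState (σ i)) (hsum : ∑ i, (c i : ℂ) • σ i = ρ) (i₀ : γ) :
    Em ρ ≤ Em (σ i₀) := by
  classical
  refine le_Em (hσ i₀) fun n q τ hτ j => ?_
  have hens : ∀ i, ∃ (m : ℕ) (q' : Fin (m + 1) → ℝ)
      (τ' : Fin (m + 1) → Matrix (ι × κ) (ι × κ) ℂ), IsPureEnsemble q' τ' (σ i) ∧ (i = i₀ → ∃ j', τ' j' = τ j) := by
    intro i
    by_cases hi : i = i₀
    · subst hi
      exact ⟨n, q, τ, hτ, fun _ => ⟨j, rfl⟩⟩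
    · obtain ⟨m, q', τ', h'⟩ := (hσ i).exists_isPureEnsemble
      exact ⟨m, q', τ', h', fun h => absurd h hi⟩
  choose m q' τ' hτ' hmem using hens
  obtain ⟨j', hj'⟩ := hmem i₀ rfl
  rw [← hj']
  exact Em_le_pureEnt_of_isPureEnsemble (IsPureEnsemble.sigma hc hsum hτ') ⟨i₀, j'⟩

end Em

/-- (i) ⟹ (ii): strong superadditivity of `E_m` for all pure states (over all
choices of the four spaces) implies it for all states. -/
theorem Em_strong_superadditive_pure_implies_all
    (hpure : ∀ (a b a' b' : Type) [Fintype a] [Fintype b] [Fintype a'] [Fintype b']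
      [DecidableEq a] [DecidableEq b] [DecidableEq a'] [DecidableEq b'],
      ∀ π : Matrix ((a × b) × (a' × b')) ((a × b) × (a' × b')) ℂ,
        IsPureState π →
        Em (reorder π) ≥ Em (trRight π) + Em (trLeft π))
    {a b a' b' : Type} [Fintype a] [Fintype b] [Fintype a'] [Fintype b']
    [DecidableEq a] [DecidableEq b] [DecidableEq a'] [DecidableEq b']
    (ρ : Matrix ((a × b) × (a' × b')) ((a × b) × (a' × b')) ℂ)
    (hρ : IsState ρ) :
    Em (reorder ρ) ≥ Em (trRight ρ) + Em (trLeft ρ) := by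
  let L := Matrix.reindexLinearEquiv ℂ ℂ (Equiv.prodProdProdComm a b a' b')
    (Equiv.prodProdProdComm a b a' b')
  refine le_Em (hρ.reindex _) fun n p π' ⟨hp, hπ', hsum⟩ i => ?_
  let σ := fun i => L.symm (π' i)
  have hσ : ∀ i, IsPureState (σ i) := fun i =>
    (hπ' i).reindex (Equiv.prodProdProdComm a b a' b').symm
  have hρσ : ∑ i, (p i : ℂ) • σ i = ρ := by
    simp only [σ, ← map_smul, ← map_sum, hsum]
    exact L.symm_apply_apply ρ
  calc Em (trRight ρ) + Em (trLeft ρ)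
      ≤ Em (trRight (σ i)) + Em (trLeft (σ i)) := by
        gcongr
        · exact Em_le_Em_of_sum_smul_eq hp (fun i => isState_trRight (hσ i).isState)
            (by rw [← trRight_sum_smul, hρσ]) i
        · exact Em_le_Em_of_sum_smul_eq hp (fun i => isState_trLeft (hσ i).isState)
            (by rw [← trLeft_sum_smul, hρσ]) i
    _ ≤ Em (reorder (σ i)) := hpure _ _ _ _ (σ i) (hσ i)
    _ = Em (π' i) := congrArg Em (L.apply_symm_apply (π' i))
    _ ≤ pureEnt (π' i) := (hπ' i).Em_le_pureEnt

end QAdditivity
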